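/- arXiv:1802.04166 — 10 statements merged into one kernel-verified Lean document; each statement's English description precedes it below -/
import Mathlib

section
/- Let Γ be a countably infinite graph such that for every finite set U of vertices there is a vertex adjacent to all of U (property (△)) and for every finite set V of vertices there is a vertex non-adjacent to all of V (property (∴)). Then Γ is MB-homogeneous: every monomorphism between finite induced subgraphs of Γ extends to a bijective endomorphism of Γ. -/
/-- A graph `Γ` is MB-homogeneous if every monomorphism between finite induced
subgraphs of `Γ` extends to a bijective endomorphism (bimorphism) of `Γ`. -/
def MBHomogeneous {V : Type*} (Γ : SimpleGraph V) : Prop :=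
  ∀ (A : Finset V) (f : V → V), Set.InjOn f A →
    (∀ u ∈ A, ∀ v ∈ A, Γ.Adj u v → Γ.Adj (f u) (f v)) →
    ∃ g : V ≃ V, (∀ u v, Γ.Adj u v → Γ.Adj (g u) (g v)) ∧ ∀ a ∈ A, g a = f a

section Aux

open Finset

variable {V : Type*}

/-- A "good" partial map: injective on `s` and adjacency-preserving on `s`. -/
def GoodMap (Γ : SimpleGraph V) (s : Finset V) (f : V → V) : Prop :=
  Set.InjOn f s ∧ ∀ u ∈ s, ∀ v ∈ s, Γ.Adj u v → Γ.Adj (f u) (f v)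

/-- A pair of a finite domain and a good map on it. -/
def GoodPair (Γ : SimpleGraph V) : Type _ :=
  Σ' (s : Finset V) (f : V → V), GoodMap Γ s f

/-- There is a common non-neighbour of `A` avoiding any finite set `T`. -/
lemma exists_nonadj_avoid [DecidableEq V] (Γ : SimpleGraph V)
    (htri : ∀ U : Finset V, ∃ u : V, ∀ x ∈ U, Γ.Adj u x)
    (hthe : ∀ W : Finset V, ∃ v : V, ∀ x ∈ W, ¬Γ.Adj v x)
    (A T : Finset V) : ∃ v, v ∉ T ∧ ∀ x ∈ A, ¬Γ.Adj v x := by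
  obtain ⟨u, hu⟩ := htri T
  obtain ⟨v, hv⟩ := hthe (insert u A)
  exact ⟨v, fun hvT => hv u (mem_insert_self _ _) ((hu v hvT).symm),
    fun x hx => hv x (mem_insert_of_mem hx)⟩

lemma step_forward [DecidableEq V] (Γ : SimpleGraph V)
    (htri : ∀ U : Finset V, ∃ u : V, ∀ x ∈ U, Γ.Adj u x)
    (s : Finset V) (f : V → V) (h : GoodMap Γ s f) (x : V) :
    ∃ s' f', GoodMap Γ s' f' ∧ s ⊆ s' ∧ (∀ a ∈ s, f' a = f a) ∧ x ∈ s' := by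
  by_cases hx : x ∈ s
  · exact ⟨s, f, h, subset_rfl, fun _ _ => rfl, hx⟩
  · obtain ⟨w, hw⟩ := htri (s.image f)
    have hwnot : w ∉ s.image f := fun hmem => Γ.irrefl (hw w hmem)
    have hne : ∀ a, a ∈ s → a ≠ x := fun a ha h' => hx (by rwa [h'] at ha)
    have hfa : ∀ a, a ∈ s → Function.update f x w a = f a :=
      fun a ha => Function.update_of_ne (hne a ha) _ _
    refine ⟨insert x s, Function.update f x w, ⟨?_, ?_⟩, subset_insert _ _,
      hfa, mem_insert_self _ _⟩
    · -- injectivity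
      intro a ha b hb hab
      simp only [coe_insert, Set.mem_insert_iff, mem_coe] at ha hb
      rcases ha with ha | ha <;> rcases hb with hb | hb
      · rw [ha, hb]
      · exfalso
        rw [ha, Function.update_self, hfa b hb] at hab
        exact hwnot (by rw [hab]; exact mem_image_of_mem f hb)
      · exfalso
        rw [hb, Function.update_self, hfa a ha] at hab
        exact hwnot (by rw [← hab]; exact mem_image_of_mem f ha)
      · rw [hfa a ha, hfa b hb] at hab
        exact h.1 ha hb hab
    · -- adjacency preserving
      intro a ha b hb hadj
      rcases mem_insert.1 ha with ha | ha <;> rcases mem_insert.1 hb with hb | hb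
      · exfalso; rw [ha, hb] at hadj; exact Γ.irrefl hadj
      · rw [ha, Function.update_self, hfa b hb]
        exact hw _ (mem_image_of_mem f hb)
      · rw [hb, Function.update_self, hfa a ha]
        exact (hw _ (mem_image_of_mem f ha)).symm
      · rw [hfa a ha, hfa b hb]
        exact h.2 a ha b hb hadj

lemma step_backward [DecidableEq V] (Γ : SimpleGraph V)
    (htri : ∀ U : Finset V, ∃ u : V, ∀ x ∈ U, Γ.Adj u x)
    (hthe : ∀ W : Finset V, ∃ v : V, ∀ x ∈ W, ¬Γ.Adj v x)
    (s : Finset V) (f : V → V) (h : GoodMap Γ s f) (w : V) (hw : w ∉ s.image f) :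
    ∃ s' f', GoodMap Γ s' f' ∧ s ⊆ s' ∧ (∀ a ∈ s, f' a = f a) ∧
      w ∈ s'.image f' := by
  obtain ⟨v, hvs, hvna⟩ := exists_nonadj_avoid Γ htri hthe s s
  have hne : ∀ a, a ∈ s → a ≠ v := fun a ha h' => hvs (by rwa [h'] at ha)
  have heq : ∀ a, a ∈ s → Function.update f v w a = f a :=
    fun a ha => Function.update_of_ne (hne a ha) _ _
  refine ⟨insert v s, Function.update f v w, ⟨?_, ?_⟩, subset_insert _ _, heq, ?_⟩
  · intro a ha b hb hab
    simp only [coe_insert, Set.mem_insert_iff, mem_coe] at ha hb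
    rcases ha with ha | ha <;> rcases hb with hb | hb
    · rw [ha, hb]
    · exfalso
      rw [ha, Function.update_self, heq b hb] at hab
      exact hw (by rw [hab]; exact mem_image_of_mem f hb)
    · exfalso
      rw [hb, Function.update_self, heq a ha] at hab
      exact hw (by rw [← hab]; exact mem_image_of_mem f ha)
    · rw [heq a ha, heq b hb] at hab
      exact h.1 ha hb hab
  · intro a ha b hb hadj
    rcases mem_insert.1 ha with ha | ha <;> rcases mem_insert.1 hb with hb | hb
    · exfalso; rw [ha, hb] at hadj; exact Γ.irrefl hadj
    · exfalso; rw [ha] at hadj; exact hvna b hb hadj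
    · exfalso; rw [hb] at hadj; exact hvna a ha hadj.symm
    · rw [heq a ha, heq b hb]
      exact h.2 a ha b hb hadj
  · exact mem_image.2 ⟨v, mem_insert_self _ _, Function.update_self _ _ _⟩

/-- Combined step: extend a good pair so that `x` is in both domain and image. -/
lemma step_both [DecidableEq V] (Γ : SimpleGraph V)
    (htri : ∀ U : Finset V, ∃ u : V, ∀ x ∈ U, Γ.Adj u x)
    (hthe : ∀ W : Finset V, ∃ v : V, ∀ x ∈ W, ¬Γ.Adj v x)
    (p : GoodPair Γ) (x : V) :
    ∃ q : GoodPair Γ, p.1 ⊆ q.1 ∧ (∀ a ∈ p.1, q.2.1 a = p.2.1 a) ∧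
      x ∈ q.1 ∧ x ∈ q.1.image q.2.1 := by
  obtain ⟨s, f, h⟩ := p
  obtain ⟨s1, f1, h1, hs1, he1, hx1⟩ := step_forward Γ htri s f h x
  by_cases hx : x ∈ s1.image f1
  · exact ⟨⟨s1, f1, h1⟩, hs1, he1, hx1, hx⟩
  · obtain ⟨s2, f2, h2, hs2, he2, him⟩ := step_backward Γ htri hthe s1 f1 h1 x hx
    exact ⟨⟨s2, f2, h2⟩, hs1.trans hs2,
      fun a ha => (he2 a (hs1 ha)).trans (he1 a ha), hs2 hx1, him⟩

end Aux

/-- A countably infinite graph with property (△) (every finite vertex set has a common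
neighbour) and property (∴) (every finite vertex set has a common non-neighbour) is
MB-homogeneous. -/
theorem stmt_7 {V : Type*} [Countable V] [Infinite V] (Γ : SimpleGraph V)
    (htriangle : ∀ U : Finset V, ∃ u : V, ∀ x ∈ U, Γ.Adj u x)
    (htherefore : ∀ W : Finset V, ∃ v : V, ∀ x ∈ W, ¬Γ.Adj v x) :
    MBHomogeneous Γ := by
  classical
  intro A f hinj hpres
  obtain ⟨d⟩ := nonempty_denumerable V
  let e : ℕ ≃ V := (Denumerable.eqv V).symm
  choose next hsub heq hmem himg using step_both Γ htriangle htherefore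
  -- the chain
  let seq : ℕ → GoodPair Γ := fun n =>
    Nat.rec (⟨A, f, hinj, hpres⟩ : GoodPair Γ) (fun n p => next p (e n)) n
  have hseq : ∀ n, seq (n + 1) = next (seq n) (e n) := fun n => rfl
  have hseq0 : seq 0 = ⟨A, f, hinj, hpres⟩ := rfl
  -- monotonicity
  have mono : ∀ m n, m ≤ n →
      (seq m).1 ⊆ (seq n).1 ∧ ∀ a ∈ (seq m).1, (seq n).2.1 a = (seq m).2.1 a := by
    intro m n hmn
    induction n, hmn using Nat.le_induction with
    | base => exact ⟨subset_rfl, fun _ _ => rfl⟩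
    | succ n hmn ih =>
      refine ⟨ih.1.trans ?_, fun a ha => ?_⟩
      · rw [hseq]; exact hsub (seq n) (e n)
      · rw [hseq]
        exact (heq (seq n) (e n) a (ih.1 ha)).trans (ih.2 a ha)
  have hvmem : ∀ v : V, v ∈ (seq (e.symm v + 1)).1 := by
    intro v
    have h1 : e (e.symm v) ∈ (seq (e.symm v + 1)).1 := by
      rw [hseq]; exact hmem _ _
    rwa [e.apply_symm_apply] at h1
  let g : V → V := fun v => (seq (e.symm v + 1)).2.1 v
  have hg : ∀ n v, v ∈ (seq n).1 → g v = (seq n).2.1 v := by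
    intro n v hv
    have h1 := mono n (max n (e.symm v + 1)) (le_max_left _ _)
    have h2 := mono (e.symm v + 1) (max n (e.symm v + 1)) (le_max_right _ _)
    have := h2.2 v (hvmem v)
    rw [h1.2 v hv] at this
    exact this.symm
  have hginj : Function.Injective g := by
    intro u v huv
    set n := max (e.symm u + 1) (e.symm v + 1) with hn
    have hu : u ∈ (seq n).1 := (mono _ n (le_max_left _ _)).1 (hvmem u)
    have hv : v ∈ (seq n).1 := (mono _ n (le_max_right _ _)).1 (hvmem v)
    rw [hg n u hu, hg n v hv] at huv
    exact (seq n).2.2.1 hu hv huv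
  have hgsurj : Function.Surjective g := by
    intro w
    have h1 : e (e.symm w) ∈ Finset.image (seq (e.symm w + 1)).2.1 (seq (e.symm w + 1)).1 := by
      rw [hseq]; exact himg _ _
    rw [e.apply_symm_apply] at h1
    obtain ⟨v, hv, hvw⟩ := Finset.mem_image.1 h1
    exact ⟨v, (hg (e.symm w + 1) v hv).trans hvw⟩
  have hgadj : ∀ u v, Γ.Adj u v → Γ.Adj (g u) (g v) := by
    intro u v hadj
    set n := max (e.symm u + 1) (e.symm v + 1) with hn
    have hu : u ∈ (seq n).1 := (mono _ n (le_max_left _ _)).1 (hvmem u)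
    have hv : v ∈ (seq n).1 := (mono _ n (le_max_right _ _)).1 (hvmem v)
    rw [hg n u hu, hg n v hv]
    exact (seq n).2.2.2 u hu v hv hadj
  have hgA : ∀ a ∈ A, g a = f a := by
    intro a ha
    have ha0 : a ∈ (seq 0).1 := by rw [hseq0]; exact ha
    have := hg 0 a ha0
    rw [hseq0] at this
    exact this
  exact ⟨Equiv.ofBijective g ⟨hginj, hgsurj⟩, hgadj, hgA⟩
end

section
/- A countable graph Γ is MB-homogeneous if and only if Γ has the mono-extension property (MEP) and the antimono-extension property (AMEP). -/
/-- The mono-extension property: any monomorphism from a finite induced subgraph `A`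
into `Γ` extends to a monomorphism from any finite `B ⊇ A` into `Γ`. -/
def MEP {V : Type*} (Γ : SimpleGraph V) : Prop :=
  ∀ (A B : Finset V), A ⊆ B → ∀ f : V → V, Set.InjOn f A →
    (∀ u ∈ A, ∀ v ∈ A, Γ.Adj u v → Γ.Adj (f u) (f v)) →
    ∃ g : V → V, Set.InjOn g B ∧
      (∀ u ∈ B, ∀ v ∈ B, Γ.Adj u v → Γ.Adj (g u) (g v)) ∧ ∀ a ∈ A, g a = f a

/-- The antimono-extension property: any antimonomorphism (injective map preserving
non-adjacency) from a finite induced subgraph `A` into `Γ` extends to an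
antimonomorphism from any finite `B ⊇ A` into `Γ`. -/
def AMEP {V : Type*} (Γ : SimpleGraph V) : Prop :=
  ∀ (A B : Finset V), A ⊆ B → ∀ f : V → V, Set.InjOn f A →
    (∀ u ∈ A, ∀ v ∈ A, u ≠ v → ¬Γ.Adj u v → ¬Γ.Adj (f u) (f v)) →
    ∃ g : V → V, Set.InjOn g B ∧
      (∀ u ∈ B, ∀ v ∈ B, u ≠ v → ¬Γ.Adj u v → ¬Γ.Adj (g u) (g v)) ∧ ∀ a ∈ A, g a = f a

/-!
Antimonomorphisms of `Γ` are the monomorphisms of the complement `Γᶜ`, and inverting a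
monomorphism between finite subgraphs gives an antimonomorphism and vice versa. So the MEP lets
a finite partial monomorphism absorb any new point into its domain, and the AMEP, applied to the
inverse and inverted back, lets it absorb any new point into its range. Enumerating the countable
vertex set, a back-and-forth construction then produces a bijective endomorphism. Conversely,
a bijective endomorphism `g` extending a monomorphism restricts to monomorphisms, and `g⁻¹`,
obtained by extending the inverse of an antimonomorphism, is a bijective antimonomorphism.
-/

namespace SimpleGraph

variable {V W : Type*}

def IsMonoOn (G : SimpleGraph V) (H : SimpleGraph W) (f : V → W) (s : Set V) : Prop :=
  Set.InjOn f s ∧ ∀ u ∈ s, ∀ v ∈ s, G.Adj u v → H.Adj (f u) (f v)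

theorem isMonoOn_compl_iff {G : SimpleGraph V} {H : SimpleGraph W} {f : V → W} {s : Set V} :
    IsMonoOn Gᶜ Hᶜ f s ↔
      Set.InjOn f s ∧ ∀ u ∈ s, ∀ v ∈ s, u ≠ v → ¬G.Adj u v → ¬H.Adj (f u) (f v) :=
  and_congr_right fun hinj => ⟨fun h u hu v hv hne hadj => (h u hu v hv ⟨hne, hadj⟩).2,
    fun h u hu v hv ⟨hne, hadj⟩ => ⟨hinj.ne hu hv hne, h u hu v hv hne hadj⟩⟩

theorem IsMonoOn.invFunOn [Nonempty V] {G : SimpleGraph V} {H : SimpleGraph W} {f : V → W}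
    {s : Set V} (hf : IsMonoOn G H f s) : IsMonoOn Hᶜ Gᶜ (Function.invFunOn f s) (f '' s) := by
  refine ⟨Function.invFunOn_injOn_image f s, ?_⟩
  rintro _ ⟨u, hu, rfl⟩ _ ⟨v, hv, rfl⟩ ⟨hne, hadj⟩
  rw [hf.1.leftInvOn_invFunOn hu, hf.1.leftInvOn_invFunOn hv]
  exact ⟨fun h => hne (congrArg f h), fun h => hadj (hf.2 u hu v hv h)⟩

def HasMonoExtension (G : SimpleGraph V) : Prop :=
  ∀ A B : Finset V, A ⊆ B → ∀ f : V → V, IsMonoOn G G f A →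
    ∃ g : V → V, IsMonoOn G G g B ∧ Set.EqOn g f A

end SimpleGraph

open SimpleGraph Function

section

variable {V : Type*}

theorem mep_iff_hasMonoExtension {Γ : SimpleGraph V} : MEP Γ ↔ Γ.HasMonoExtension :=
  ⟨fun h A B hAB f hf =>
    let ⟨g, hinj, hadj, hgf⟩ := h A B hAB f hf.1 hf.2
    ⟨g, ⟨hinj, hadj⟩, hgf⟩,
  fun h A B hAB f hinj hadj =>
    let ⟨g, hg, hgf⟩ := h A B hAB f ⟨hinj, hadj⟩
    ⟨g, hg.1, hg.2, hgf⟩⟩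

theorem amep_iff_hasMonoExtension_compl {Γ : SimpleGraph V} : AMEP Γ ↔ Γᶜ.HasMonoExtension :=
  ⟨fun h A B hAB f hf =>
    let ⟨g, hinj, hadj, hgf⟩ := h A B hAB f hf.1 (isMonoOn_compl_iff.1 hf).2
    ⟨g, isMonoOn_compl_iff.2 ⟨hinj, hadj⟩, hgf⟩,
  fun h A B hAB f hinj hadj =>
    let ⟨g, hg, hgf⟩ := h A B hAB f (isMonoOn_compl_iff.2 ⟨hinj, hadj⟩)
    ⟨g, (isMonoOn_compl_iff.1 hg).1, (isMonoOn_compl_iff.1 hg).2, hgf⟩⟩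

namespace MBHomogeneous

variable {Γ : SimpleGraph V}

theorem hasMonoExtension (h : MBHomogeneous Γ) : Γ.HasMonoExtension := by
  intro A B _ f hf
  obtain ⟨g, hg, hgf⟩ := h A f hf.1 hf.2
  exact ⟨g, ⟨g.injective.injOn, fun u _ v _ huv => hg u v huv⟩, hgf⟩

theorem hasMonoExtension_compl (h : MBHomogeneous Γ) : Γᶜ.HasMonoExtension := by
  intro A B _ f hf
  classical
  rcases A.eq_empty_or_nonempty with rfl | ⟨a, -⟩
  · exact ⟨id, ⟨Set.injOn_id _, fun _ _ _ _ huv => huv⟩, by simp⟩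
  have : Nonempty V := ⟨a⟩
  have hinv := hf.invFunOn
  rw [compl_compl] at hinv
  obtain ⟨g, hg, hgf⟩ := h (A.image f) (invFunOn f A) (by simpa using hinv.1)
    (by simpa using hinv.2)
  refine ⟨g.symm, ⟨g.symm.injective.injOn, fun u _ v _ ⟨hne, hadj⟩ => ⟨?_, ?_⟩⟩, fun x hx => ?_⟩
  · simpa using hne
  · exact fun h => hadj (by simpa using hg _ _ h)
  · rw [Equiv.symm_apply_eq, hgf (f x) (Finset.mem_image_of_mem f hx),
      hf.1.leftInvOn_invFunOn hx]

end MBHomogeneous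

namespace SimpleGraph

variable {G H : SimpleGraph V}

theorem exists_equiv_of_chain (D : ℕ → Finset V) (F : ℕ → V → V)
    (hD : ∀ n, D n ⊆ D (n + 1)) (hF : ∀ n, Set.EqOn (F (n + 1)) (F n) (D n))
    (hmono : ∀ n, IsMonoOn G H (F n) (D n)) (hdom : ∀ x, ∃ n, x ∈ D n)
    (hran : ∀ y, ∃ n, y ∈ F n '' D n) :
    ∃ g : V ≃ V, (∀ u v, G.Adj u v → H.Adj (g u) (g v)) ∧ Set.EqOn g (F 0) (D 0) := by
  have hDmono : Monotone D := monotone_nat_of_le_succ hD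
  have hagree : ∀ m n, m ≤ n → Set.EqOn (F n) (F m) (D m) := by
    intro m n hmn
    induction n, hmn using Nat.le_induction with
    | base => exact Set.eqOn_refl _ _
    | succ n hmn ih => exact fun x hx => (hF n (hDmono hmn hx)).trans (ih hx)
  choose N hN using hdom
  have hpair : ∀ x y, ∃ n, x ∈ D n ∧ y ∈ D n := fun x y =>
    ⟨max (N x) (N y), hDmono (le_max_left _ _) (hN x), hDmono (le_max_right _ _) (hN y)⟩
  set g : V → V := fun x => F (N x) x
  have hg : ∀ n, Set.EqOn g (F n) (D n) := fun n x hx =>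
    (hagree _ _ (le_max_left (N x) n) (hN x)).symm.trans (hagree _ _ (le_max_right _ _) hx)
  have hinj : Injective g := fun x y hxy => by
    obtain ⟨n, hx, hy⟩ := hpair x y
    exact (hmono n).1 hx hy (by rwa [← hg n hx, ← hg n hy])
  have hsurj : Surjective g := fun y => by
    obtain ⟨n, x, hx, rfl⟩ := hran y
    exact ⟨x, hg n hx⟩
  refine ⟨Equiv.ofBijective g ⟨hinj, hsurj⟩, fun u v huv => ?_, hg 0⟩
  obtain ⟨n, hu, hv⟩ := hpair u v
  change H.Adj (g u) (g v)
  rw [hg n hu, hg n hv]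
  exact (hmono n).2 u hu v hv huv

theorem exists_equiv_of_back_and_forth [Countable V]
    (hstep : ∀ (D : Finset V) (f : V → V), IsMonoOn G H f D → ∀ v, ∃ (D' : Finset V) (f' : V → V),
      D ⊆ D' ∧ IsMonoOn G H f' D' ∧ Set.EqOn f' f D ∧ v ∈ D' ∧ v ∈ f' '' D')
    {A : Finset V} {f : V → V} (hf : IsMonoOn G H f A) :
    ∃ g : V ≃ V, (∀ u v, G.Adj u v → H.Adj (g u) (g v)) ∧ Set.EqOn g f A := by
  rcases isEmpty_or_nonempty V with hV | hV
  · exact ⟨Equiv.refl V, fun u => isEmptyElim u, fun a => isEmptyElim a⟩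
  obtain ⟨e, he⟩ := exists_surjective_nat V
  choose! D' F' hsub hmono heq hmem hmem_image using hstep
  obtain ⟨S, hS0, hS⟩ : ∃ S : ℕ → Finset V × (V → V), S 0 = (A, f) ∧
      ∀ n, S (n + 1) = (D' (S n).1 (S n).2 (e n), F' (S n).1 (S n).2 (e n)) :=
    ⟨fun n => Nat.rec (A, f) (fun n p => (D' p.1 p.2 (e n), F' p.1 p.2 (e n))) n,
      rfl, fun _ => rfl⟩
  have hSmono : ∀ n, IsMonoOn G H (S n).2 (S n).1 := by
    intro n
    induction n with
    | zero => rwa [hS0]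
    | succ n ih => rw [hS]; exact hmono _ _ ih _
  have hcover : ∀ n, e n ∈ (S (n + 1)).1 ∧ e n ∈ (S (n + 1)).2 '' (S (n + 1)).1 := fun n => by
    rw [hS]; exact ⟨hmem _ _ (hSmono n) _, hmem_image _ _ (hSmono n) _⟩
  obtain ⟨g, hg, hgf⟩ := exists_equiv_of_chain (fun n => (S n).1) (fun n => (S n).2)
    (fun n => by rw [hS]; exact hsub _ _ (hSmono n) _)
    (fun n => by rw [hS]; exact heq _ _ (hSmono n) _) hSmono
    (fun x => by obtain ⟨n, rfl⟩ := he x; exact ⟨n + 1, (hcover n).1⟩)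
    (fun y => by obtain ⟨n, rfl⟩ := he y; exact ⟨n + 1, (hcover n).2⟩)
  rw [hS0] at hgf
  exact ⟨g, hg, hgf⟩

variable {G : SimpleGraph V}

/-- The inverse `f⁻¹` is a monomorphism of `Gᶜ`; extending it to `v` with the AMEP and
inverting back yields a monomorphism hitting `v`. -/
theorem IsMonoOn.exists_extension_mem_image (hGc : Gᶜ.HasMonoExtension) {D : Finset V}
    {f : V → V} (hf : IsMonoOn G G f D) (v : V) :
    ∃ (D' : Finset V) (f' : V → V), D ⊆ D' ∧ IsMonoOn G G f' D' ∧ Set.EqOn f' f D ∧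
      v ∈ f' '' D' := by
  classical
  have : Nonempty V := ⟨v⟩
  set T := insert v (D.image f)
  obtain ⟨k, hk, hkf⟩ := hGc (D.image f) T (Finset.subset_insert _ _) (Function.invFunOn f D)
    (by simpa using hf.invFunOn)
  have hkD : ∀ d ∈ D, k (f d) = d := fun d hd =>
    (hkf (Finset.mem_image_of_mem f hd)).trans (hf.1.leftInvOn_invFunOn hd)
  have hfT : ∀ d ∈ D, f d ∈ T := fun d hd =>
    Finset.mem_insert_of_mem (Finset.mem_image_of_mem f hd)
  have hkinv := hk.invFunOn
  rw [compl_compl] at hkinv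
  refine ⟨T.image k, Function.invFunOn k T, fun d hd => ?_, by simpa using hkinv, fun d hd => ?_,
    k v, by simp [T], hk.1.leftInvOn_invFunOn (by simp [T])⟩
  · exact Finset.mem_image.2 ⟨f d, hfT d hd, hkD d hd⟩
  · calc Function.invFunOn k T d = Function.invFunOn k T (k (f d)) := by rw [hkD d hd]
      _ = f d := hk.1.leftInvOn_invFunOn (hfT d hd)

theorem IsMonoOn.exists_extension_mem_and_mem_image (hG : G.HasMonoExtension)
    (hGc : Gᶜ.HasMonoExtension) {D : Finset V} {f : V → V} (hf : IsMonoOn G G f D) (v : V) :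
    ∃ (D' : Finset V) (f' : V → V), D ⊆ D' ∧ IsMonoOn G G f' D' ∧ Set.EqOn f' f D ∧
      v ∈ D' ∧ v ∈ f' '' D' := by
  classical
  obtain ⟨f₁, hf₁, hf₁f⟩ := hG D (insert v D) (Finset.subset_insert _ _) f hf
  obtain ⟨D', f', hsub, hf', hf'f, hv⟩ := hf₁.exists_extension_mem_image hGc v
  exact ⟨D', f', (Finset.subset_insert _ _).trans hsub, hf',
    fun d hd => (hf'f (by simp [hd])).trans (hf₁f hd), hsub (Finset.mem_insert_self _ _), hv⟩

theorem mbHomogeneous_of_hasMonoExtension [Countable V] (hG : G.HasMonoExtension)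
    (hGc : Gᶜ.HasMonoExtension) : MBHomogeneous G := fun _ _ hinj hadj =>
  exists_equiv_of_back_and_forth
    (fun _ _ hf => hf.exists_extension_mem_and_mem_image hG hGc) ⟨hinj, hadj⟩

end SimpleGraph

end

/-- A countable graph is MB-homogeneous iff it has the MEP and the AMEP. -/
theorem stmt_8 {V : Type*} [Countable V] (Γ : SimpleGraph V) :
    MBHomogeneous Γ ↔ (MEP Γ ∧ AMEP Γ) := by
  rw [mep_iff_hasMonoExtension, amep_iff_hasMonoExtension_compl]
  exact ⟨fun h => ⟨h.hasMonoExtension, h.hasMonoExtension_compl⟩,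
    fun h => mbHomogeneous_of_hasMonoExtension h.1 h.2⟩
end

section
/- If Γ is an MB-homogeneous graph, then its complement Γ̄ is also MB-homogeneous. -/
/-- If `Γ` is MB-homogeneous then so is its complement. -/
theorem stmt_9 {V : Type*} [Countable V] (Γ : SimpleGraph V)
    (h : MBHomogeneous Γ) : MBHomogeneous Γᶜ := by
  classical
  cases isEmpty_or_nonempty V with
  | inl hV => exact fun A f _ _ => ⟨Equiv.refl V, fun u => (IsEmpty.false u).elim, fun a ha => (IsEmpty.false a).elim⟩
  | inr hV => ?_
  intro A f hinj hmono
  set B : Finset V := A.image f with hB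
  set fi : V → V := Function.invFunOn f A with hfi
  have hmemB : ∀ a ∈ A, f a ∈ B := fun a ha => Finset.mem_image_of_mem f ha
  have hfiA : ∀ b ∈ B, fi b ∈ (A : Set V) := by
    intro b hb
    rcases Finset.mem_image.mp hb with ⟨a, ha, rfl⟩
    exact Function.invFunOn_mem ⟨a, ha, rfl⟩
  have hffi : ∀ b ∈ B, f (fi b) = b := by
    intro b hb
    rcases Finset.mem_image.mp hb with ⟨a, ha, rfl⟩
    exact Function.invFunOn_eq ⟨a, ha, rfl⟩
  have hfif : ∀ a ∈ A, fi (f a) = a := by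
    intro a ha
    exact hinj (hfiA _ (hmemB a ha)) ha (hffi _ (hmemB a ha))
  have hinj' : Set.InjOn fi B := by
    intro b1 h1 b2 h2 he
    rw [← hffi b1 h1, ← hffi b2 h2, he]
  have hmono' : ∀ u ∈ B, ∀ v ∈ B, Γ.Adj u v → Γ.Adj (fi u) (fi v) := by
    intro u hu v hv huv
    by_contra hna
    by_cases hne : fi u = fi v
    · exact huv.ne (by rw [← hffi u hu, ← hffi v hv, hne])
    · have : Γᶜ.Adj (fi u) (fi v) := ⟨hne, hna⟩
      have := hmono _ (hfiA u hu) _ (hfiA v hv) this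
      rw [hffi u hu, hffi v hv] at this
      exact this.2 huv
  obtain ⟨g, hg, hgB⟩ := h B fi hinj' hmono'
  refine ⟨g.symm, ?_, ?_⟩
  · intro u v huv
    refine ⟨fun he => huv.1 (by simpa using congrArg g he), fun hadj => ?_⟩
    have := hg _ _ hadj
    simpa using huv.2 (by simpa using this)
  · intro a ha
    have : g (f a) = a := by rw [hgB _ (hmemB a ha), hfif a ha]
    rw [Equiv.symm_apply_eq]
    exact this.symm
end

section
/- Every countably infinite MB-homogeneous graph that is neither complete nor null contains both an infinite complete subgraph and an infinite independent set as induced subgraphs. -/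
namespace MBHomogeneous

variable {V : Type*} {Γ : SimpleGraph V}

theorem compl [Nonempty V] (hmb : MBHomogeneous Γ) : MBHomogeneous Γᶜ := by
  classical
  intro A f hinj hadj
  set f' := Function.invFunOn f (A : Set V)
  have hleft : ∀ a ∈ A, f' (f a) = a := fun a ha => hinj.leftInvOn_invFunOn ha
  have hinj' : Set.InjOn f' (A.image f) := by
    simp only [Finset.coe_image, Set.InjOn, Set.forall_mem_image]
    intro a ha b hb hab
    rw [hleft a ha, hleft b hb] at hab
    rw [hab]
  -- `f` preserves non-edges, so its inverse preserves edges
  have hadj' : ∀ x ∈ A.image f, ∀ y ∈ A.image f, Γ.Adj x y → Γ.Adj (f' x) (f' y) := by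
    simp only [Finset.forall_mem_image]
    intro a ha b hb hab
    rw [hleft a ha, hleft b hb]
    by_contra hnab
    have hne : a ≠ b := by rintro rfl; exact hab.ne rfl
    exact (hadj a ha b hb ⟨hne, hnab⟩).2 hab
  obtain ⟨g, hg, hgf'⟩ := hmb (A.image f) f' hinj' hadj'
  refine ⟨g.symm, fun u v huv => ⟨g.symm.injective.ne huv.1, fun h => huv.2 ?_⟩, fun a ha => ?_⟩
  · simpa using hg _ _ h
  · rw [Equiv.symm_apply_eq, hgf' _ (Finset.mem_image_of_mem f ha), hleft a ha]

theorem exists_notMem_not_adj_of_isIndepSet (hmb : MBHomogeneous Γ) {I : Finset V}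
    (hI : Γ.IsIndepSet (I : Set V)) {t w : V} (ht : t ∈ I) (hw : w ∉ I) :
    ∃ z ∉ I, (∀ v ∈ I, v ≠ t → ¬Γ.Adj z v) ∧ (¬Γ.Adj t w → ¬Γ.Adj z t) := by
  classical
  have hinj : Set.InjOn (Function.update id t w) I := by
    intro x hx y hy hxy
    by_cases hxt : x = t <;> by_cases hyt : y = t <;>
      simp only [Function.update_apply, hxt, hyt, if_true, if_false, id] at hxy
    · exact hxt.trans hyt.symm
    · exact absurd (hxy ▸ hy) hw
    · exact absurd (hxy ▸ hx) hw
    · exact hxy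
  obtain ⟨g, hg, hgI⟩ := hmb I (Function.update id t w) hinj
    fun u hu v hv huv => (hI hu hv huv.ne huv).elim
  have hgz : g (g.symm t) = t := g.apply_symm_apply t
  refine ⟨g.symm t, fun hz => ?_, fun v hv hvt hzv => ?_, fun htw hzt => htw ?_⟩
  · rw [hgI _ hz] at hgz
    by_cases h : g.symm t = t
    · rw [h, Function.update_self] at hgz
      exact hw (hgz ▸ ht)
    · rw [Function.update_of_ne h] at hgz
      exact h hgz
  · have := hg _ _ hzv
    rw [hgz, hgI v hv, Function.update_of_ne hvt] at this
    exact hI ht hv (Ne.symm hvt) this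
  · simpa [hgz, hgI t ht] using hg _ _ hzt

theorem exists_notMem_forall_not_adj_of_isIndepSet [Infinite V] (hmb : MBHomogeneous Γ)
    {I : Finset V} (hI : Γ.IsIndepSet (I : Set V)) {s t : V} (hs : s ∈ I) (ht : t ∈ I)
    (hst : s ≠ t) : ∃ z ∉ I, ∀ v ∈ I, ¬Γ.Adj z v := by
  obtain ⟨w, hw⟩ := Infinite.exists_notMem_finset I
  obtain ⟨z₁, hz₁, hz₁I, -⟩ := hmb.exists_notMem_not_adj_of_isIndepSet hI ht hw
  obtain ⟨z, hz, hzI, hzs⟩ := hmb.exists_notMem_not_adj_of_isIndepSet hI hs hz₁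
  refine ⟨z, hz, fun v hv => ?_⟩
  by_cases hvs : v = s
  · exact hvs ▸ hzs fun h => hz₁I s hs hst h.symm
  · exact hzI v hv hvs

theorem exists_infinite_isIndepSet [Infinite V] (hmb : MBHomogeneous Γ) {a b : V}
    (hab : a ≠ b) (hnadj : ¬Γ.Adj a b) : ∃ S : Set V, S.Infinite ∧ Γ.IsIndepSet S := by
  have hpair : Γ.IsIndepSet {a, b} :=
    Set.pairwise_pair.2 fun _ => ⟨hnadj, fun h => hnadj h.symm⟩
  obtain ⟨M, hsub, hmax⟩ := zorn_subset_nonempty {S | Γ.IsIndepSet S}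
    (fun c hc hchain _ => ⟨⋃₀ c, hchain.pairwise_sUnion.2 hc, fun _ => Set.subset_sUnion_of_mem⟩)
    {a, b} hpair
  refine ⟨M, fun hfin => ?_, hmax.prop⟩
  obtain ⟨I, rfl⟩ := hfin.exists_finset_coe
  obtain ⟨z, hz, hzI⟩ := hmb.exists_notMem_forall_not_adj_of_isIndepSet hmax.prop
    (hsub (Set.mem_insert a _)) (hsub (Set.mem_insert_of_mem a rfl)) hab
  have hins : Γ.IsIndepSet (insert z (I : Set V)) :=
    hmax.prop.insert fun v hv _ => ⟨hzI v hv, fun h => hzI v hv h.symm⟩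
  exact hz (hmax.2 hins (Set.subset_insert _ _) (Set.mem_insert z _))

end MBHomogeneous

theorem stmt_10_general {V : Type*} [Infinite V] (Γ : SimpleGraph V)
    (hmb : MBHomogeneous Γ)
    (hnotcomplete : ∃ u v : V, u ≠ v ∧ ¬Γ.Adj u v)
    (hnotnull : ∃ u v : V, Γ.Adj u v) :
    (∃ S : Set V, S.Infinite ∧ ∀ u ∈ S, ∀ v ∈ S, u ≠ v → Γ.Adj u v) ∧
    (∃ S : Set V, S.Infinite ∧ ∀ u ∈ S, ∀ v ∈ S, ¬Γ.Adj u v) := by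
  obtain ⟨a, b, hab⟩ := hnotnull
  obtain ⟨u, v, huv, hnuv⟩ := hnotcomplete
  obtain ⟨C, hCinf, hC⟩ :=
    hmb.compl.exists_infinite_isIndepSet hab.ne fun h => h.2 hab
  obtain ⟨I, hIinf, hI⟩ := hmb.exists_infinite_isIndepSet huv hnuv
  refine ⟨⟨C, hCinf, Γ.isIndepSet_compl.1 hC⟩, ⟨I, hIinf, ?_⟩⟩
  exact fun x hx y hy hxy => hI hx hy hxy.ne hxy

/-- A countably infinite MB-homogeneous graph that is neither complete nor null
contains an infinite clique and an infinite independent set as induced subgraphs. -/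
theorem stmt_10 {V : Type*} [Countable V] [Infinite V] (Γ : SimpleGraph V)
    (hmb : MBHomogeneous Γ)
    (hnotcomplete : ∃ u v : V, u ≠ v ∧ ¬Γ.Adj u v)
    (hnotnull : ∃ u v : V, Γ.Adj u v) :
    (∃ S : Set V, S.Infinite ∧ ∀ u ∈ S, ∀ v ∈ S, u ≠ v → Γ.Adj u v) ∧
    (∃ S : Set V, S.Infinite ∧ ∀ u ∈ S, ∀ v ∈ S, ¬Γ.Adj u v) :=
  stmt_10_general Γ hmb hnotcomplete hnotnull
end

section
/- The disjoint union of countably infinitely many copies of the countably infinite complete graph is MB-homogeneous. -/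
/-- The disjoint union of countably infinitely many copies of the countably infinite
complete graph: vertices `ℕ × ℕ`, with `(i,m) ~ (j,n)` iff `i = j` and `m ≠ n`. -/
def unionOfCliques : SimpleGraph (ℕ × ℕ) where
  Adj p q := p.1 = q.1 ∧ p.2 ≠ q.2
  symm := by
    constructor
    intro p q h
    exact ⟨h.1.symm, h.2.symm⟩
  loopless := by
    constructor
    intro p h
    exact h.2 rfl

/-
An adjacency-preserving bijection of `ℕ × ℕ` is the same as a surjection `σ` of the set of
columns together with, for each column `k`, a bijection from the union of the columns in
`σ⁻¹ k` onto column `k`: such a map sends each clique into a clique and, being injective,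
keeps distinct vertices distinct. A partial monomorphism `f` on a finite `A` maps two vertices
of one column into one column, so it induces a map on the finitely many columns met by `A`,
which extends to a surjection `σ`. Every fibre of `σ` is then a countably infinite set of
vertices on which `f` is a finite partial injection into column `k`, and any such partial
injection extends to a bijection.
-/

open Function Set

theorem Equiv.exists_extend_of_injective {α β : Type*} [Countable α] [Infinite α]
    [Countable β] [Infinite β] {s : Set α} (hs : s.Finite) (p : s → β) (hp : Injective p) :
    ∃ e : α ≃ β, ∀ a : s, e a = p a := by
  classical
  have : Finite s := hs.to_subtype
  have : Infinite ↥(sᶜ) := hs.infinite_compl.to_subtype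
  have : Infinite ↥(range p)ᶜ := (finite_range p).infinite_compl.to_subtype
  obtain ⟨ec⟩ : Nonempty (↥(sᶜ) ≃ ↥(range p)ᶜ) := nonempty_equiv_of_countable
  refine ⟨(Equiv.Set.sumCompl s).symm.trans
    ((Equiv.sumCongr (Equiv.ofInjective p hp) ec).trans (Equiv.Set.sumCompl (range p))), ?_⟩
  intro a
  simp [Equiv.Set.sumCompl_symm_apply_of_mem a.2]

theorem Equiv.exists_fiberwise_extend_of_injOn {α β κ : Type*} [Countable α] [Countable β]
    {φ : α → κ} {ψ : β → κ} (hφ : ∀ k, Infinite {a // φ a = k})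
    (hψ : ∀ k, Infinite {b // ψ b = k}) {s : Set α} (hs : s.Finite) (p : α → β)
    (hp : InjOn p s) (hps : ∀ a ∈ s, ψ (p a) = φ a) :
    ∃ g : α ≃ β, (∀ a, ψ (g a) = φ a) ∧ ∀ a ∈ s, g a = p a := by
  have fiber_extend : ∀ k, ∃ e : {a // φ a = k} ≃ {b // ψ b = k},
      ∀ a (ha : a.1 ∈ s), (e a).1 = p a := by
    intro k
    obtain ⟨e, he⟩ := Equiv.exists_extend_of_injective (s := {a : {a // φ a = k} | a.1 ∈ s})
      (hs.preimage Subtype.val_injective.injOn)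
      (fun a => (⟨p a.1, (hps _ a.2).trans a.1.2⟩ : {b // ψ b = k}))
      (fun a b h => Subtype.ext (Subtype.ext (hp a.2 b.2 (congrArg Subtype.val h))))
    exact ⟨e, fun a ha => congrArg Subtype.val (he ⟨a, ha⟩)⟩
  choose e he using fiber_extend
  exact ⟨Equiv.ofFiberEquiv e, Equiv.ofFiberEquiv_map e, fun a ha => he _ ⟨a, rfl⟩ ha⟩

theorem Nat.exists_surjective_eqOn {s : Set ℕ} (hs : s.Finite) (τ : ℕ → ℕ) :
    ∃ σ : ℕ → ℕ, Surjective σ ∧ EqOn σ τ s := by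
  obtain ⟨N, hN⟩ := hs.bddAbove
  refine ⟨fun i => if i ≤ N then τ i else i - (N + 1), fun k => ⟨k + (N + 1), ?_⟩,
    fun i hi => if_pos (hN hi)⟩
  simp only [show ¬ k + (N + 1) ≤ N by omega, if_false, Nat.add_sub_cancel]

theorem infinite_subtype_comp_fst_eq {ι γ κ : Type*} [Infinite γ] {σ : ι → κ} {k : κ}
    (hk : k ∈ range σ) : Infinite {x : ι × γ // σ x.1 = k} := by
  obtain ⟨i, hi⟩ := hk
  exact Infinite.of_injective (fun m => ⟨(i, m), hi⟩) fun m n h => by simpa using h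

namespace unionOfCliques

theorem adj_map_of_fst_map {g : ℕ × ℕ → ℕ × ℕ} (hg : Injective g) {σ : ℕ → ℕ}
    (hσ : ∀ x, (g x).1 = σ x.1) {u v : ℕ × ℕ} (huv : unionOfCliques.Adj u v) :
    unionOfCliques.Adj (g u) (g v) := by
  refine ⟨by rw [hσ, hσ, huv.1], fun h => ?_⟩
  exact unionOfCliques.ne_of_adj huv (hg (Prod.ext (by rw [hσ, hσ, huv.1]) h))

theorem exists_surjective_fst_of_adj_preserving {A : Finset (ℕ × ℕ)} {f : ℕ × ℕ → ℕ × ℕ}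
    (hf : ∀ u ∈ A, ∀ v ∈ A, unionOfCliques.Adj u v → unionOfCliques.Adj (f u) (f v)) :
    ∃ σ : ℕ → ℕ, Surjective σ ∧ ∀ a ∈ A, σ a.1 = (f a).1 := by
  have column_factors : FactorsThrough (fun a : A => (f a).1) (fun a : A => (a : ℕ × ℕ).1) := by
    rintro ⟨u, hu⟩ ⟨v, hv⟩ (h : u.1 = v.1)
    by_cases huv : u = v
    · subst huv; rfl
    · exact (hf u hu v hv ⟨h, fun h' => huv (Prod.ext h h')⟩).1
  obtain ⟨σ, hσ, hστ⟩ := Nat.exists_surjective_eqOn (A.finite_toSet.image Prod.fst)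
    (extend (fun a : A => (a : ℕ × ℕ).1) (fun a => (f a).1) id)
  exact ⟨σ, hσ, fun a ha =>
    (hστ (mem_image_of_mem _ ha)).trans (column_factors.extend_apply id ⟨a, ha⟩)⟩

end unionOfCliques

/-- The disjoint union of infinitely many infinite complete graphs is MB-homogeneous. -/
theorem stmt_11 : MBHomogeneous unionOfCliques := by
  intro A f hinj hf
  obtain ⟨σ, hσ, hσf⟩ := unionOfCliques.exists_surjective_fst_of_adj_preserving hf
  obtain ⟨g, hgσ, hgf⟩ := Equiv.exists_fiberwise_extend_of_injOn (φ := fun x => σ x.1)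
    (ψ := Prod.fst) (fun k => infinite_subtype_comp_fst_eq (hσ k))
    (fun k => infinite_subtype_comp_fst_eq (σ := id) ⟨k, rfl⟩) A.finite_toSet f hinj
    (fun a ha => (hσf a ha).symm)
  exact ⟨g, fun u v => unionOfCliques.adj_map_of_fst_map g.injective hgσ, hgf⟩
end

section
/- For n > 1, the disjoint union of n copies of the countably infinite complete graph is MM-homogeneous but not MB-homogeneous. -/
/-- MM-homogeneity: every monomorphism between finite induced subgraphs of `Γ`
extends to an injective endomorphism of `Γ`. -/
def MMHomogeneous {V : Type*} (Γ : SimpleGraph V) : Prop :=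
  ∀ (A : Finset V) (f : V → V), Set.InjOn f A →
    (∀ u ∈ A, ∀ v ∈ A, Γ.Adj u v → Γ.Adj (f u) (f v)) →
    ∃ g : V → V, Function.Injective g ∧
      (∀ u v, Γ.Adj u v → Γ.Adj (g u) (g v)) ∧ ∀ a ∈ A, g a = f a

/-- The disjoint union of `n` copies of the countably infinite complete graph:
vertices `Fin n × ℕ`, with `(i,a) ~ (j,b)` iff `i = j` and `a ≠ b`. -/
def nCliques (n : ℕ) : SimpleGraph (Fin n × ℕ) where
  Adj p q := p.1 = q.1 ∧ p.2 ≠ q.2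
  symm := by
    constructor
    intro p q h
    exact ⟨h.1.symm, h.2.symm⟩
  loopless := by
    constructor
    intro p h
    exact h.2 rfl

/-!
An injective map that sends every clique of `nCliques n` into a clique is an endomorphism: two
distinct vertices of one clique go to distinct vertices of one clique, which are adjacent.
A monomorphism `f` defined on a finite set `A` already sends each clique meeting `A` into a clique,
so it extends by sending every vertex outside `A` injectively to the right clique, at a height above
all second coordinates of `f '' A`.

A bijective endomorphism, on the other hand, induces a surjective, hence injective, map on the
finitely many cliques, so it never merges two cliques. The partial map `(0,0) ↦ (0,0)`,
`(1,0) ↦ (0,1)` is a monomorphism (its domain has no edges) that does merge them.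
-/

open Function

namespace nCliques

variable {n : ℕ}

theorem fst_eq_of_adj_preserving {A : Set (Fin n × ℕ)} {f : Fin n × ℕ → Fin n × ℕ}
    (hf : ∀ u ∈ A, ∀ v ∈ A, (nCliques n).Adj u v → (nCliques n).Adj (f u) (f v))
    {p q : Fin n × ℕ} (hp : p ∈ A) (hq : q ∈ A) (h : p.1 = q.1) : (f p).1 = (f q).1 := by
  by_cases hpq : p.2 = q.2
  · rw [Prod.ext h hpq]
  · exact (hf p hp q hq ⟨h, hpq⟩).1

theorem exists_clique_map {A : Set (Fin n × ℕ)} {f : Fin n × ℕ → Fin n × ℕ}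
    (hf : ∀ u ∈ A, ∀ v ∈ A, (nCliques n).Adj u v → (nCliques n).Adj (f u) (f v)) :
    ∃ t : Fin n → Fin n, ∀ a ∈ A, (f a).1 = t a.1 := by
  have : ∀ i, ∃ j, ∀ a ∈ A, a.1 = i → (f a).1 = j := by
    intro i
    by_cases h : ∃ b ∈ A, b.1 = i
    · obtain ⟨b, hb, rfl⟩ := h
      exact ⟨(f b).1, fun a ha hab => fst_eq_of_adj_preserving hf ha hb hab⟩
    · exact ⟨i, fun a ha hai => absurd ⟨a, ha, hai⟩ h⟩
  choose t ht using this
  exact ⟨t, fun a ha => ht a.1 a ha rfl⟩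

theorem adj_map_of_injective {g : Fin n × ℕ → Fin n × ℕ} (hg : Injective g)
    {t : Fin n → Fin n} (ht : ∀ p, (g p).1 = t p.1) {u v : Fin n × ℕ}
    (huv : (nCliques n).Adj u v) : (nCliques n).Adj (g u) (g v) := by
  have hfst : (g u).1 = (g v).1 := by rw [ht, ht, huv.1]
  exact ⟨hfst, fun hsnd => huv.ne (hg (Prod.ext hfst hsnd))⟩

theorem mmHomogeneous : MMHomogeneous (nCliques n) := by
  classical
  intro A f hinj hf
  obtain ⟨t, ht⟩ := exists_clique_map (A := (A : Set (Fin n × ℕ))) hf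
  set M := A.sup (fun a => (f a).2) + 1
  have hM : ∀ a ∈ A, (f a).2 < M := fun a ha =>
    Nat.lt_succ_of_le (Finset.le_sup (f := fun a => (f a).2) ha)
  let fresh : Fin n × ℕ → Fin n × ℕ := fun p => (t p.1, M + Nat.pair p.1 p.2)
  have hg : Injective ((A : Set (Fin n × ℕ)).piecewise f fresh) := by
    rw [Set.injective_piecewise_iff]
    refine ⟨hinj, fun p _ q _ h => ?_, fun p hp q _ h => ?_⟩
    · simp only [fresh, Prod.mk.injEq, add_right_inj, Nat.pair_eq_pair] at h
      exact Prod.ext (Fin.ext h.2.1) h.2.2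
    · have hsnd : (f p).2 = M + Nat.pair q.1 q.2 := congrArg Prod.snd h
      have := hM p hp
      omega
  refine ⟨_, hg, fun u v => adj_map_of_injective hg (t := t) (fun p => ?_),
    fun a ha => Set.piecewise_eq_of_mem _ _ _ ha⟩
  by_cases hp : p ∈ A
  · rw [Set.piecewise_eq_of_mem _ _ _ hp, ht p hp]
  · rw [Set.piecewise_eq_of_notMem _ _ _ hp]

theorem fst_injective_of_equiv {g : (Fin n × ℕ) ≃ (Fin n × ℕ)}
    (hg : ∀ u v, (nCliques n).Adj u v → (nCliques n).Adj (g u) (g v)) {p q : Fin n × ℕ}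
    (h : (g p).1 = (g q).1) : p.1 = q.1 := by
  obtain ⟨t, ht⟩ := exists_clique_map (A := Set.univ) (f := g) fun u _ v _ => hg u v
  have ht_surj : Surjective t := fun j =>
    ⟨(g.symm (j, 0)).1, by rw [← ht _ trivial, g.apply_symm_apply]⟩
  exact Finite.injective_iff_surjective.mpr ht_surj (by rwa [ht p trivial, ht q trivial] at h)

theorem not_mbHomogeneous (hn : 1 < n) : ¬MBHomogeneous (nCliques n) := by
  intro hMB
  set i : Fin n := ⟨0, by omega⟩
  set j : Fin n := ⟨1, hn⟩
  set A : Finset (Fin n × ℕ) := {(i, 0), (j, 0)}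
  have hA : ∀ p ∈ A, p.2 = 0 := by simp [A]
  obtain ⟨g, hg, hgf⟩ := hMB A (fun p => (i, p.1.val))
    (fun p hp q hq h => Prod.ext (Fin.ext (congrArg Prod.snd h)) ((hA p hp).trans (hA q hq).symm))
    (fun u hu v hv huv => absurd ((hA u hu).trans (hA v hv).symm) huv.2)
  have hij : i = j := fst_injective_of_equiv hg (p := (i, 0)) (q := (j, 0)) <| by
    rw [hgf _ (by simp [A]), hgf _ (by simp [A])]
  simp [i, j] at hij

end nCliques

/-- For `n > 1`, the disjoint union of `n` infinite complete graphs is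
MM-homogeneous but not MB-homogeneous. -/
theorem stmt_12 (n : ℕ) (hn : 1 < n) :
    MMHomogeneous (nCliques n) ∧ ¬MBHomogeneous (nCliques n) :=
  ⟨nCliques.mmHomogeneous, nCliques.not_mbHomogeneous hn⟩
end

section
/- Every connected MH-homogeneous (hence MB-homogeneous) graph with at least one edge has diameter at most 2. -/
/-- MH-homogeneity: every monomorphism between finite induced subgraphs of `Γ`
extends to an endomorphism (adjacency-preserving self-map) of `Γ`. -/
def MHHomogeneous {V : Type*} (Γ : SimpleGraph V) : Prop :=
  ∀ (A : Finset V) (f : V → V), Set.InjOn f A →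
    (∀ u ∈ A, ∀ v ∈ A, Γ.Adj u v → Γ.Adj (f u) (f v)) →
    ∃ g : V → V, (∀ u v, Γ.Adj u v → Γ.Adj (g u) (g v)) ∧ ∀ a ∈ A, g a = f a

/-- A connected MH-homogeneous graph with at least one edge has diameter at most 2:
any two distinct vertices are adjacent or have a common neighbour. -/
theorem stmt_13 {V : Type*} (Γ : SimpleGraph V)
    (hconn : Γ.Connected) (hmh : MHHomogeneous Γ)
    (hedge : ∃ u v : V, Γ.Adj u v) :
    ∀ u v : V, u ≠ v → Γ.Adj u v ∨ ∃ w : V, Γ.Adj u w ∧ Γ.Adj w v := by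
  classical
  -- First, find a "cherry": p–c–q with p,q distinct and non-adjacent.
  have cherry : ∀ {a b : V} (_ : Γ.Walk a b), ¬ Γ.Adj a b → a ≠ b →
      ∃ p c q : V, Γ.Adj p c ∧ Γ.Adj c q ∧ ¬ Γ.Adj p q ∧ p ≠ q := by
    intro a b w
    induction w with
    | nil => intro _ h; exact absurd rfl h
    | @cons a x b h w ih =>
      intro hna hne
      by_cases hxb : x = b
      · subst hxb; exact absurd h hna
      · by_cases haxb : Γ.Adj x b
        · exact ⟨a, x, b, h, haxb, hna, hne⟩
        · exact ih haxb hxb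
  intro u v hne
  by_cases hadj : Γ.Adj u v
  · exact Or.inl hadj
  right
  obtain ⟨p, c, q, hpc, hcq, hpq, hpqne⟩ :=
    cherry ((hconn u v).some) hadj hne
  have hqmem : q ∈ ({p, q} : Finset V) := by simp
  have hpmem : p ∈ ({p, q} : Finset V) := by simp
  set f : V → V := fun z => if z = p then u else v with hf
  have hfp : f p = u := by simp [hf]
  have hfq : f q = v := by simp [hf, hpqne.symm]
  obtain ⟨g, hg, hga⟩ := hmh {p, q} f
    (by
      intro a ha b hb hab
      simp only [Finset.coe_insert, Finset.coe_singleton, Set.mem_insert_iff,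
        Set.mem_singleton_iff] at ha hb
      rcases ha with rfl | rfl <;> rcases hb with rfl | rfl
      · rfl
      · rw [hfp, hfq] at hab; exact absurd hab hne
      · rw [hfp, hfq] at hab; exact absurd hab.symm hne
      · rfl)
    (by
      intro a ha b hb hab
      simp only [Finset.mem_insert, Finset.mem_singleton] at ha hb
      rcases ha with rfl | rfl <;> rcases hb with rfl | rfl
      · exact absurd hab (Γ.irrefl)
      · exact absurd hab hpq
      · exact absurd hab.symm hpq
      · exact absurd hab (Γ.irrefl))
  have hgp : g p = u := (hga p hpmem).trans hfp
  have hgq : g q = v := (hga q hqmem).trans hfq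
  refine ⟨g c, ?_, ?_⟩
  · have := hg p c hpc; rwa [hgp] at this
  · have := hg c q hcq; rwa [hgq] at this
end

section
/- Let Γ and Δ be countable graphs each having property (△) (every finite vertex set has a common neighbour) and property (∴) (every finite vertex set has a common non-neighbour). Then there exists a bijective homomorphism from Γ to Δ and a bijective homomorphism from Δ to Γ; i.e., Γ and Δ are equivalent up to bimorphisms. -/
/-!
Back and forth. A finite partial injection from `Γ` to `Δ` preserving edges extends forth to
any new vertex `v` of `Γ` by sending it to a common neighbour of the current image (property (△)
of `Δ`), which preserves every edge at `v`; it extends back to any new vertex of `Δ` by pulling it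
back to a common non-neighbour of the current domain lying outside it (both properties of `Γ`),
which creates no new edge to preserve. Since both graphs are countable, alternating these steps
along enumerations yields a bijective homomorphism; the hypotheses are symmetric, so this works
in both directions.
-/

section BackAndForth

variable {V W : Type*}

theorem exists_equiv_forall_mem (R : Set (V × W)) (htot : ∀ v, ∃ w, (v, w) ∈ R)
    (hsurj : ∀ w, ∃ v, (v, w) ∈ R) (hinj : ∀ p ∈ R, ∀ q ∈ R, p.1 = q.1 ↔ p.2 = q.2) :
    ∃ e : V ≃ W, ∀ v, (v, e v) ∈ R := by
  choose f hf using htot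
  refine ⟨.ofBijective f ⟨fun v v' h => ?_, fun w => ?_⟩, hf⟩
  · exact (hinj _ (hf v) _ (hf v')).2 h
  · obtain ⟨v, hv⟩ := hsurj w
    exact ⟨v, (hinj _ (hf v) _ hv).1 rfl⟩

variable [DecidableEq V] [DecidableEq W] {P : Set (Finset (V × W))}

theorem isCofinal_setOf_mem_fst
    (hforth : ∀ s ∈ P, ∀ v, (∀ p ∈ s, p.1 ≠ v) → ∃ w, insert (v, w) s ∈ P) (v : V) :
    IsCofinal {s : P | ∃ w, (v, w) ∈ s.1} := by
  intro s
  by_cases hv : ∃ p ∈ s.1, p.1 = v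
  · obtain ⟨⟨_, w⟩, hw, rfl⟩ := hv
    exact ⟨s, ⟨w, hw⟩, le_rfl⟩
  · push Not at hv
    obtain ⟨w, hw⟩ := hforth s s.2 v hv
    exact ⟨⟨_, hw⟩, ⟨w, Finset.mem_insert_self _ _⟩, Finset.subset_insert _ _⟩

theorem isCofinal_setOf_mem_snd
    (hback : ∀ s ∈ P, ∀ w, (∀ p ∈ s, p.2 ≠ w) → ∃ v, insert (v, w) s ∈ P) (w : W) :
    IsCofinal {s : P | ∃ v, (v, w) ∈ s.1} := by
  intro s
  by_cases hw : ∃ p ∈ s.1, p.2 = w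
  · obtain ⟨⟨v, _⟩, hv, rfl⟩ := hw
    exact ⟨s, ⟨v, hv⟩, le_rfl⟩
  · push Not at hw
    obtain ⟨v, hv⟩ := hback s s.2 w hw
    exact ⟨⟨_, hv⟩, ⟨v, Finset.mem_insert_self _ _⟩, Finset.subset_insert _ _⟩

/-- Back and forth: the union of a generic ideal (`Order.idealOfCofinals`) of finite partial
bijections is the graph of a bijection. -/
theorem exists_equiv_of_backAndForth [Countable V] [Countable W] (hP : P.Nonempty)
    (hinj : ∀ s ∈ P, ∀ p ∈ s, ∀ q ∈ s, p.1 = q.1 ↔ p.2 = q.2)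
    (hforth : ∀ s ∈ P, ∀ v, (∀ p ∈ s, p.1 ≠ v) → ∃ w, insert (v, w) s ∈ P)
    (hback : ∀ s ∈ P, ∀ w, (∀ p ∈ s, p.2 ≠ w) → ∃ v, insert (v, w) s ∈ P) :
    ∃ e : V ≃ W, ∀ v v', ∃ s ∈ P, (v, e v) ∈ s ∧ (v', e v') ∈ s := by
  have := Encodable.ofCountable (V ⊕ W)
  let 𝒟 : V ⊕ W → Order.Cofinal P :=
    Sum.elim (fun v => ⟨_, isCofinal_setOf_mem_fst hforth v⟩)
      (fun w => ⟨_, isCofinal_setOf_mem_snd hback w⟩)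
  let I := Order.idealOfCofinals ⟨_, hP.some_mem⟩ 𝒟
  have hpair : ∀ a b, (∃ s ∈ I, a ∈ s.1) → (∃ s ∈ I, b ∈ s.1) → ∃ s ∈ I, a ∈ s.1 ∧ b ∈ s.1 := by
    rintro a b ⟨s, hs, ha⟩ ⟨t, ht, hb⟩
    obtain ⟨u, hu, hsu, htu⟩ := I.directed s hs t ht
    exact ⟨u, hu, hsu ha, htu hb⟩
  have htot : ∀ v, ∃ w, ∃ s ∈ I, (v, w) ∈ s.1 := fun v => by
    obtain ⟨s, ⟨w, hw⟩, hs⟩ := Order.cofinal_meets_idealOfCofinals _ 𝒟 (.inl v)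
    exact ⟨w, s, hs, hw⟩
  have hsurj : ∀ w, ∃ v, ∃ s ∈ I, (v, w) ∈ s.1 := fun w => by
    obtain ⟨s, ⟨v, hv⟩, hs⟩ := Order.cofinal_meets_idealOfCofinals _ 𝒟 (.inr w)
    exact ⟨v, s, hs, hv⟩
  obtain ⟨e, he⟩ := exists_equiv_forall_mem {a | ∃ s ∈ I, a ∈ s.1} htot hsurj
    fun a ha b hb => by
      obtain ⟨s, -, ha, hb⟩ := hpair a b ha hb
      exact hinj s s.2 a ha b hb
  refine ⟨e, fun v v' => ?_⟩
  obtain ⟨s, -, hv, hv'⟩ := hpair _ _ (he v) (he v')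
  exact ⟨s, s.2, hv, hv'⟩

end BackAndForth

namespace SimpleGraph

variable {V W : Type*} (Γ : SimpleGraph V) (Δ : SimpleGraph W)

/-- The graph of a finite partial injection `V → W` that maps edges to edges. -/
def IsPartialBimorphism (s : Finset (V × W)) : Prop :=
  (∀ p ∈ s, ∀ q ∈ s, p.1 = q.1 ↔ p.2 = q.2) ∧ ∀ p ∈ s, ∀ q ∈ s, Γ.Adj p.1 q.1 → Δ.Adj p.2 q.2

variable {Γ Δ}

theorem isPartialBimorphism_empty : Γ.IsPartialBimorphism Δ ∅ := by
  simp [IsPartialBimorphism]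

theorem isPartialBimorphism_insert [DecidableEq V] [DecidableEq W] {s : Finset (V × W)}
    (hs : Γ.IsPartialBimorphism Δ s) {v : V} {w : W} (hv : ∀ p ∈ s, p.1 ≠ v)
    (hw : ∀ p ∈ s, p.2 ≠ w) (hadj : ∀ p ∈ s, Γ.Adj v p.1 → Δ.Adj w p.2) :
    Γ.IsPartialBimorphism Δ (insert (v, w) s) := by
  constructor
  · intro p hp q hq
    rcases Finset.mem_insert.1 hp with rfl | hp <;> rcases Finset.mem_insert.1 hq with rfl | hq
    · exact iff_of_true rfl rfl
    · exact iff_of_false (hv q hq).symm (hw q hq).symm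
    · exact iff_of_false (hv p hp) (hw p hp)
    · exact hs.1 p hp q hq
  · intro p hp q hq hpq
    rcases Finset.mem_insert.1 hp with rfl | hp <;> rcases Finset.mem_insert.1 hq with rfl | hq
    · exact absurd hpq (Γ.irrefl)
    · exact hadj q hq hpq
    · exact (hadj p hp hpq.symm).symm
    · exact hs.2 p hp q hq hpq

theorem IsPartialBimorphism.exists_insert_left [DecidableEq V] [DecidableEq W]
    (hΔtri : ∀ U : Finset W, ∃ u : W, ∀ x ∈ U, Δ.Adj u x) {s : Finset (V × W)}
    (hs : Γ.IsPartialBimorphism Δ s) {v : V} (hv : ∀ p ∈ s, p.1 ≠ v) :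
    ∃ w, Γ.IsPartialBimorphism Δ (insert (v, w) s) := by
  obtain ⟨w, hw⟩ := hΔtri (s.image Prod.snd)
  have hw : ∀ p ∈ s, Δ.Adj w p.2 := fun p hp => hw _ (Finset.mem_image_of_mem _ hp)
  exact ⟨w, isPartialBimorphism_insert hs hv (fun p hp => (hw p hp).ne.symm) fun p hp _ => hw p hp⟩

theorem exists_notMem_forall_not_adj
    (htri : ∀ U : Finset V, ∃ u : V, ∀ x ∈ U, Γ.Adj u x)
    (hther : ∀ U : Finset V, ∃ v : V, ∀ x ∈ U, ¬Γ.Adj v x) (U : Finset V) :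
    ∃ v ∉ U, ∀ x ∈ U, ¬Γ.Adj v x := by
  classical
  obtain ⟨u, hu⟩ := htri U
  obtain ⟨v, hv⟩ := hther (insert u U)
  -- `v` is not adjacent to `u`, which is adjacent to all of `U`.
  exact ⟨v, fun hvU => hv u (Finset.mem_insert_self _ _) (hu v hvU).symm,
    fun x hx => hv x (Finset.mem_insert_of_mem hx)⟩

theorem IsPartialBimorphism.exists_insert_right [DecidableEq V] [DecidableEq W]
    (hΓtri : ∀ U : Finset V, ∃ u : V, ∀ x ∈ U, Γ.Adj u x)
    (hΓther : ∀ U : Finset V, ∃ v : V, ∀ x ∈ U, ¬Γ.Adj v x) {s : Finset (V × W)}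
    (hs : Γ.IsPartialBimorphism Δ s) {w : W} (hw : ∀ p ∈ s, p.2 ≠ w) :
    ∃ v, Γ.IsPartialBimorphism Δ (insert (v, w) s) := by
  obtain ⟨v, hvs, hv⟩ := exists_notMem_forall_not_adj hΓtri hΓther (s.image Prod.fst)
  refine ⟨v, isPartialBimorphism_insert hs (fun p hp h => hvs ?_) hw fun p hp hadj => ?_⟩
  · exact h ▸ Finset.mem_image_of_mem _ hp
  · exact absurd hadj (hv _ (Finset.mem_image_of_mem _ hp))

theorem exists_equiv_forall_adj_map_adj [Countable V] [Countable W]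
    (hΓtri : ∀ U : Finset V, ∃ u : V, ∀ x ∈ U, Γ.Adj u x)
    (hΓther : ∀ U : Finset V, ∃ v : V, ∀ x ∈ U, ¬Γ.Adj v x)
    (hΔtri : ∀ U : Finset W, ∃ u : W, ∀ x ∈ U, Δ.Adj u x) :
    ∃ α : V ≃ W, ∀ u v, Γ.Adj u v → Δ.Adj (α u) (α v) := by
  classical
  obtain ⟨α, hα⟩ := exists_equiv_of_backAndForth (P := {s | Γ.IsPartialBimorphism Δ s})
    ⟨∅, isPartialBimorphism_empty⟩ (fun _ hs => hs.1)
    (fun _ hs _ hv => IsPartialBimorphism.exists_insert_left hΔtri hs hv)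
    (fun _ hs _ hw => IsPartialBimorphism.exists_insert_right hΓtri hΓther hs hw)
  refine ⟨α, fun u v huv => ?_⟩
  obtain ⟨s, hs, hu, hv⟩ := hα u v
  exact hs.2 _ hu _ hv huv

end SimpleGraph

theorem stmt_14_general {V W : Type*} [Countable V] [Countable W]
    (Γ : SimpleGraph V) (Δ : SimpleGraph W)
    (hΓtri : ∀ U : Finset V, ∃ u : V, ∀ x ∈ U, Γ.Adj u x)
    (hΓther : ∀ U : Finset V, ∃ v : V, ∀ x ∈ U, ¬Γ.Adj v x)
    (hΔtri : ∀ U : Finset W, ∃ u : W, ∀ x ∈ U, Δ.Adj u x)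
    (hΔther : ∀ U : Finset W, ∃ v : W, ∀ x ∈ U, ¬Δ.Adj v x) :
    (∃ α : V ≃ W, ∀ u v, Γ.Adj u v → Δ.Adj (α u) (α v)) ∧
    (∃ β : W ≃ V, ∀ u v, Δ.Adj u v → Γ.Adj (β u) (β v)) :=
  ⟨SimpleGraph.exists_equiv_forall_adj_map_adj hΓtri hΓther hΔtri,
    SimpleGraph.exists_equiv_forall_adj_map_adj hΔtri hΔther hΓtri⟩

/-- Two countable graphs each having property (△) (every finite vertex set has a
common neighbour) and property (∴) (every finite vertex set has a common
non-neighbour) are equivalent up to bimorphisms: there are bijective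
homomorphisms in both directions. -/
theorem stmt_14 {V W : Type*} [Countable V] [Infinite V] [Countable W] [Infinite W]
    (Γ : SimpleGraph V) (Δ : SimpleGraph W)
    (hΓtri : ∀ U : Finset V, ∃ u : V, ∀ x ∈ U, Γ.Adj u x)
    (hΓther : ∀ U : Finset V, ∃ v : V, ∀ x ∈ U, ¬Γ.Adj v x)
    (hΔtri : ∀ U : Finset W, ∃ u : W, ∀ x ∈ U, Δ.Adj u x)
    (hΔther : ∀ U : Finset W, ∃ v : W, ∀ x ∈ U, ¬Δ.Adj v x) :
    (∃ α : V ≃ W, ∀ u v, Γ.Adj u v → Δ.Adj (α u) (α v)) ∧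
    (∃ β : W ≃ V, ∀ u v, Δ.Adj u v → Γ.Adj (β u) (β v)) :=
  stmt_14_general Γ Δ hΓtri hΓther hΔtri hΔther
end

section
/- If Γ and Δ are graphs equivalent up to bimorphisms (there exist bijective homomorphisms α : Γ → Δ and β : Δ → Γ), then Γ has properties (△) and (∴) if and only if Δ does. -/
/-- If `Γ` and `Δ` are equivalent up to bimorphisms (bijective homomorphisms
`α : Γ → Δ` and `β : Δ → Γ` exist), then `Γ` has properties (△) and (∴)
iff `Δ` does. -/
theorem stmt_15 {V W : Type*} (Γ : SimpleGraph V) (Δ : SimpleGraph W)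
    (α : V ≃ W) (hα : ∀ u v, Γ.Adj u v → Δ.Adj (α u) (α v))
    (β : W ≃ V) (hβ : ∀ u v, Δ.Adj u v → Γ.Adj (β u) (β v)) :
    ((∀ U : Finset V, ∃ u : V, ∀ x ∈ U, Γ.Adj u x) ∧
     (∀ U : Finset V, ∃ v : V, ∀ x ∈ U, ¬Γ.Adj v x)) ↔
    ((∀ U : Finset W, ∃ u : W, ∀ x ∈ U, Δ.Adj u x) ∧
     (∀ U : Finset W, ∃ v : W, ∀ x ∈ U, ¬Δ.Adj v x)) := by
  classical
  constructor
  · rintro ⟨h1, h2⟩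
    constructor
    · intro U
      obtain ⟨u, hu⟩ := h1 (U.image α.symm)
      refine ⟨α u, fun x hx => ?_⟩
      have := hα u (α.symm x) (hu _ (Finset.mem_image_of_mem _ hx))
      simpa using this
    · intro U
      obtain ⟨v, hv⟩ := h2 (U.image β)
      refine ⟨β.symm v, fun x hx hadj => ?_⟩
      have := hβ _ _ hadj
      rw [β.apply_symm_apply] at this
      exact hv _ (Finset.mem_image_of_mem _ hx) this
  · rintro ⟨h1, h2⟩
    constructor
    · intro U
      obtain ⟨u, hu⟩ := h1 (U.image β.symm)
      refine ⟨β u, fun x hx => ?_⟩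
      have := hβ u (β.symm x) (hu _ (Finset.mem_image_of_mem _ hx))
      simpa using this
    · intro U
      obtain ⟨v, hv⟩ := h2 (U.image α)
      refine ⟨α.symm v, fun x hx hadj => ?_⟩
      have := hα _ _ hadj
      rw [α.apply_symm_apply] at this
      exact hv _ (Finset.mem_image_of_mem _ hx) this
end

section
/- Let P : ℕ → Bool be a sequence, and let Γ(P) be the graph on ℕ with i ~ j (for i ≠ j) iff P(max(i,j)) = 0. If P takes the value 0 infinitely often and the value 1 infinitely often, then Γ(P) has property (△) and property (∴), hence is MB-homogeneous. -/
/-- The graph on `ℕ` determined by a binary sequence `P`: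
`i ~ j` (for `i ≠ j`) iff `P (max i j) = 0` (encoded as `false`). -/
def seqGraph (P : ℕ → Bool) : SimpleGraph ℕ where
  Adj i j := i ≠ j ∧ P (max i j) = false
  symm := by
    constructor
    intro i j h
    exact ⟨h.1.symm, by rw [max_comm]; exact h.2⟩
  loopless := by
    constructor
    intro i h
    exact h.1 rfl

/-!
Beyond any finite set of vertices the sequence `P` takes both values; a later `0` is a common
neighbour and a later `1` a common non-neighbour of the set. With (△) and (∴), a partial
monomorphism between finite sets extends forth, sending a new vertex to a common neighbour of
the image (which is outside the image since the graph is loopless), and back, taking as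
preimage of a new vertex a common non-neighbour of the domain that lies outside the domain.
A back-and-forth along an enumeration of the countable vertex set then produces a bijective
endomorphism extending the given map.
-/

namespace SimpleGraph

variable {V : Type*} (G : SimpleGraph V)

/-- Property (△). -/
def HasCommonNeighbor : Prop :=
  ∀ U : Finset V, ∃ u, ∀ x ∈ U, G.Adj u x

/-- Property (∴). -/
def HasCommonNonNeighbor : Prop :=
  ∀ U : Finset V, ∃ v, ∀ x ∈ U, ¬G.Adj v x

variable {G}

/-- A common non-neighbour of `U ∪ {w}`, with `w` a common neighbour of `U`, cannot lie in `U`. -/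
theorem HasCommonNonNeighbor.exists_notMem (hnbr : G.HasCommonNeighbor)
    (hnonnbr : G.HasCommonNonNeighbor) (U : Finset V) :
    ∃ v ∉ U, ∀ x ∈ U, ¬G.Adj v x := by
  classical
  obtain ⟨w, hw⟩ := hnbr U
  obtain ⟨v, hv⟩ := hnonnbr (insert w U)
  refine ⟨v, fun hvU => hv w (U.mem_insert_self w) (hw v hvU).symm, fun x hx => ?_⟩
  exact hv x (U.mem_insert_of_mem hx)

variable (G) in
structure PartialMono where
  dom : Finset V
  toFun : V → V
  injOn : Set.InjOn toFun dom
  map_adj : ∀ u ∈ dom, ∀ v ∈ dom, G.Adj u v → G.Adj (toFun u) (toFun v)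

namespace PartialMono

instance : Preorder G.PartialMono where
  le p q := p.dom ⊆ q.dom ∧ ∀ x ∈ p.dom, q.toFun x = p.toFun x
  le_refl _ := ⟨subset_rfl, fun _ _ => rfl⟩
  le_trans _ _ _ hpq hqr :=
    ⟨hpq.1.trans hqr.1, fun x hx => (hqr.2 x (hpq.1 hx)).trans (hpq.2 x hx)⟩

theorem exists_le_map_eq (p : G.PartialMono) {a b : V} (ha : a ∉ p.dom)
    (hb : ∀ x ∈ p.dom, p.toFun x ≠ b) (hadj : ∀ x ∈ p.dom, G.Adj a x → G.Adj b (p.toFun x)) :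
    ∃ q : G.PartialMono, p ≤ q ∧ a ∈ q.dom ∧ q.toFun a = b := by
  classical
  have hupd : ∀ x ∈ p.dom, Function.update p.toFun a b x = p.toFun x := fun x hx =>
    Function.update_of_ne (ne_of_mem_of_not_mem hx ha) _ _
  refine ⟨⟨insert a p.dom, Function.update p.toFun a b, ?_, ?_⟩,
    ⟨p.dom.subset_insert a, hupd⟩, p.dom.mem_insert_self a, Function.update_self a b p.toFun⟩
  · rw [Finset.coe_insert, Set.injOn_insert (by simpa using ha), Function.update_self]
    refine ⟨p.injOn.congr fun x hx => (hupd x hx).symm, ?_⟩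
    rintro ⟨x, hx, hxb⟩
    exact hb x hx ((hupd x hx).symm.trans hxb)
  · intro u hu v hv huv
    rw [Finset.mem_insert] at hu hv
    rcases hu with rfl | hu <;> rcases hv with rfl | hv
    · exact absurd huv G.irrefl
    · rw [Function.update_self, hupd v hv]
      exact hadj v hv huv
    · rw [Function.update_self, hupd u hu]
      exact (hadj u hu huv.symm).symm
    · rw [hupd u hu, hupd v hv]
      exact p.map_adj u hu v hv huv

theorem exists_le_mem_dom (hnbr : G.HasCommonNeighbor) (p : G.PartialMono) (a : V) :
    ∃ q : G.PartialMono, p ≤ q ∧ a ∈ q.dom := by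
  classical
  by_cases ha : a ∈ p.dom
  · exact ⟨p, le_rfl, ha⟩
  obtain ⟨b, hb⟩ := hnbr (p.dom.image p.toFun)
  have hb' : ∀ x ∈ p.dom, G.Adj b (p.toFun x) := fun x hx => hb _ (Finset.mem_image_of_mem _ hx)
  obtain ⟨q, hpq, haq, -⟩ :=
    p.exists_le_map_eq ha (fun x hx hxb => G.irrefl (hxb ▸ hb' x hx)) fun x hx _ => hb' x hx
  exact ⟨q, hpq, haq⟩

theorem exists_le_mem_image (hnbr : G.HasCommonNeighbor) (hnonnbr : G.HasCommonNonNeighbor)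
    (p : G.PartialMono) (b : V) :
    ∃ q : G.PartialMono, p ≤ q ∧ ∃ a ∈ q.dom, q.toFun a = b := by
  by_cases hb : ∃ x ∈ p.dom, p.toFun x = b
  · exact ⟨p, le_rfl, hb⟩
  simp only [not_exists, not_and] at hb
  obtain ⟨a, ha, hna⟩ := hnonnbr.exists_notMem hnbr p.dom
  obtain ⟨q, hpq, haq, hqa⟩ := p.exists_le_map_eq ha hb fun x hx hax => absurd hax (hna x hx)
  exact ⟨q, hpq, a, haq, hqa⟩

theorem toFun_eq_of_monotone {s : ℕ → G.PartialMono} (hs : Monotone s) {m n : ℕ} {x : V}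
    (hm : x ∈ (s m).dom) (hn : x ∈ (s n).dom) : (s m).toFun x = (s n).toFun x := by
  rcases le_total m n with hmn | hnm
  · exact ((hs hmn).2 x hm).symm
  · exact (hs hnm).2 x hn

theorem exists_equiv_of_monotone {s : ℕ → G.PartialMono} (hs : Monotone s)
    (hdom : ∀ a, ∃ n, a ∈ (s n).dom) (himage : ∀ b, ∃ n, ∃ a ∈ (s n).dom, (s n).toFun a = b) :
    ∃ g : V ≃ V, (∀ u v, G.Adj u v → G.Adj (g u) (g v)) ∧ ∀ a ∈ (s 0).dom, g a = (s 0).toFun a := by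
  choose N hN using hdom
  set g : V → V := fun a => (s (N a)).toFun a
  have hg : ∀ n a, a ∈ (s n).dom → g a = (s n).toFun a := fun n a ha =>
    toFun_eq_of_monotone hs (hN a) ha
  have mem_max : ∀ a b, a ∈ (s (max (N a) (N b))).dom ∧ b ∈ (s (max (N a) (N b))).dom :=
    fun a b => ⟨(hs (le_max_left _ _)).1 (hN a), (hs (le_max_right _ _)).1 (hN b)⟩
  have hinj : Function.Injective g := fun a b hab => by
    obtain ⟨ha, hb⟩ := mem_max a b
    rw [hg _ a ha, hg _ b hb] at hab
    exact (s _).injOn ha hb hab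
  have hsurj : Function.Surjective g := fun b => by
    obtain ⟨n, a, ha, rfl⟩ := himage b
    exact ⟨a, hg n a ha⟩
  refine ⟨Equiv.ofBijective g ⟨hinj, hsurj⟩, fun u v huv => ?_, fun a ha => hg 0 a ha⟩
  obtain ⟨hu, hv⟩ := mem_max u v
  change G.Adj (g u) (g v)
  rw [hg _ u hu, hg _ v hv]
  exact (s _).map_adj u hu v hv huv

end PartialMono

open PartialMono in
theorem mbHomogeneous_of_hasCommonNeighbor_of_hasCommonNonNeighbor [Countable V]
    (hnbr : G.HasCommonNeighbor) (hnonnbr : G.HasCommonNonNeighbor) : MBHomogeneous G := by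
  intro A f hinj hmap
  have : Encodable V := Encodable.ofCountable V
  let D : V ⊕ V → Order.Cofinal G.PartialMono
    | .inl a => ⟨{q | a ∈ q.dom}, fun p => p.exists_le_mem_dom hnbr a |>.imp fun _ h => h.symm⟩
    | .inr b => ⟨{q | ∃ a ∈ q.dom, q.toFun a = b},
        fun p => p.exists_le_mem_image hnbr hnonnbr b |>.imp fun _ h => h.symm⟩
  let p : G.PartialMono := ⟨A, f, hinj, hmap⟩
  -- an increasing sequence starting at `p` and meeting every `D i`
  exact exists_equiv_of_monotone (s := Order.sequenceOfCofinals p D)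
    (Order.sequenceOfCofinals.monotone p D)
    (fun a => ⟨_, Order.sequenceOfCofinals.encode_mem p D (.inl a)⟩)
    (fun b => ⟨_, Order.sequenceOfCofinals.encode_mem p D (.inr b)⟩)

end SimpleGraph

theorem seqGraph_adj_of_lt {P : ℕ → Bool} {x y : ℕ} (hxy : x < y) :
    (seqGraph P).Adj y x ↔ P y = false := by
  simp [seqGraph, hxy.ne', max_eq_left hxy.le]

theorem seqGraph_hasCommonNeighbor {P : ℕ → Bool} (h0 : {i | P i = false}.Infinite) :
    (seqGraph P).HasCommonNeighbor := fun U => by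
  obtain ⟨u, hu, hUu⟩ := h0.exists_gt (U.sup id)
  have hlt : ∀ x ∈ U, x < u := fun x hx => (U.le_sup (f := id) hx).trans_lt hUu
  exact ⟨u, fun x hx => (seqGraph_adj_of_lt (hlt x hx)).2 hu⟩

theorem seqGraph_hasCommonNonNeighbor {P : ℕ → Bool} (h1 : {i | P i = true}.Infinite) :
    (seqGraph P).HasCommonNonNeighbor := fun U => by
  obtain ⟨v, hv, hUv⟩ := h1.exists_gt (U.sup id)
  have hlt : ∀ x ∈ U, x < v := fun x hx => (U.le_sup (f := id) hx).trans_lt hUv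
  exact ⟨v, fun x hx => by simpa [seqGraph_adj_of_lt (hlt x hx)] using hv⟩

/-- If the binary sequence `P` has infinitely many `0`'s and infinitely many `1`'s,
then `Γ(P)` has properties (△) and (∴), and hence is MB-homogeneous. -/
theorem stmt_16 (P : ℕ → Bool)
    (h0 : {i | P i = false}.Infinite) (h1 : {i | P i = true}.Infinite) :
    (∀ U : Finset ℕ, ∃ u : ℕ, ∀ x ∈ U, (seqGraph P).Adj u x) ∧
    (∀ U : Finset ℕ, ∃ v : ℕ, ∀ x ∈ U, ¬(seqGraph P).Adj v x) ∧
    MBHomogeneous (seqGraph P) := by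
  have hnbr := seqGraph_hasCommonNeighbor h0
  have hnonnbr := seqGraph_hasCommonNonNeighbor h1
  exact ⟨hnbr, hnonnbr,
    (seqGraph P).mbHomogeneous_of_hasCommonNeighbor_of_hasCommonNonNeighbor hnbr hnonnbr⟩
end
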